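/- arXiv:2008.00344 — 3 statements merged into one kernel-verified Lean document; each statement's English description precedes it below -/
import Mathlib

section
/- Let s_n be a sequence of positive reals with s_n = o(n^{-1/2}). Let B_n denote the closed unit ball in n-dimensional Euclidean space and λ^n the Lebesgue measure. Then λ^n((B_n + s_n·e_1) \ B_n) / λ^n(B_n) → 0 as n → ∞, where e_1 is the first standard basis vector. -/
/-!
Slicing along `e₁`, each line `{(t, y) : t ∈ ℝ}` with `‖y‖ ≤ 1` meets `(B_n + a e₁) \ B_n` in an
interval of length at most `|a|`, and misses it when `‖y‖ > 1`; by Cavalieri the difference has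
volume at most `|a| · λ^{n-1}(B_{n-1})`. Gautschi's inequality `Γ(x + 1/2) ≤ √x Γ(x)`, a
consequence of the log-convexity of `Γ`, gives `λ^{n-1}(B_{n-1}) ≤ √n λ^n(B_n)`, so the ratio is
at most `|s_n| √n → 0`.
-/

open MeasureTheory Filter

/-- The first standard basis vector of `ℝⁿ` (zero if `n = 0`). -/
noncomputable def firstBasisVector (n : ℕ) : EuclideanSpace ℝ (Fin n) :=
  WithLp.toLp 2 (fun i => if (i : ℕ) = 0 then 1 else 0)

open Metric Real Set

theorem Real.Gamma_add_half_le_sqrt_mul_Gamma {x : ℝ} (hx : 0 < x) :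
    Gamma (x + 1 / 2) ≤ √x * Gamma x := by
  have hG := Gamma_pos_of_pos hx
  have hconv : Gamma ((1 / 2) * x + (1 / 2) * (x + 1)) ≤
      Gamma x ^ (1 / 2 : ℝ) * Gamma (x + 1) ^ (1 / 2 : ℝ) :=
    Gamma_mul_add_mul_le_rpow_Gamma_mul_rpow_Gamma hx (by linarith) one_half_pos one_half_pos
      (by norm_num)
  rw [Gamma_add_one hx.ne', ← sqrt_eq_rpow, ← sqrt_eq_rpow, ← sqrt_mul hG.le,
    show Gamma x * (x * Gamma x) = x * (Gamma x * Gamma x) by ring, sqrt_mul hx.le,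
    sqrt_mul_self hG.le] at hconv
  convert hconv using 2
  ring

theorem EuclideanSpace.volume_closedBall_zero_one (n : ℕ) :
    volume (closedBall (0 : EuclideanSpace ℝ (Fin n)) 1) =
      ENNReal.ofReal (√π ^ n / Gamma (n / 2 + 1)) := by
  rcases n with _ | n
  · rw [← (PiLp.volume_preserving_toLp (Fin 0)).measure_preimage
      measurableSet_closedBall.nullMeasurableSet]
    simp [Subsingleton.eq_univ_of_nonempty, volume_pi]
  · simp [EuclideanSpace.volume_closedBall]

theorem EuclideanSpace.volume_closedBall_le_sqrt_mul_succ (m : ℕ) :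
    volume (closedBall (0 : EuclideanSpace ℝ (Fin m)) 1) ≤
      ENNReal.ofReal √(m + 1) * volume (closedBall (0 : EuclideanSpace ℝ (Fin (m + 1))) 1) := by
  rw [volume_closedBall_zero_one, volume_closedBall_zero_one, ← ENNReal.ofReal_mul (by positivity)]
  apply ENNReal.ofReal_le_ofReal
  have hG : 0 < Gamma (m / 2 + 1) := Gamma_pos_of_pos (by positivity)
  have hG' : 0 < Gamma ((m + 1 : ℕ) / 2 + 1) := Gamma_pos_of_pos (by positivity)
  have hgautschi : Gamma ((m + 1 : ℕ) / 2 + 1) ≤ √(m / 2 + 1) * Gamma (m / 2 + 1) := by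
    convert Gamma_add_half_le_sqrt_mul_Gamma (x := m / 2 + 1) (by positivity) using 2
    push_cast; ring
  have hsqrt : √(m / 2 + 1) ≤ √(m + 1) * √π := by
    rw [← sqrt_mul (by positivity)]
    gcongr
    nlinarith [pi_gt_three]
  rw [mul_div_assoc', div_le_div_iff₀ hG hG', pow_succ]
  calc √π ^ m * Gamma ((m + 1 : ℕ) / 2 + 1)
      ≤ √π ^ m * (√(m + 1) * √π * Gamma (m / 2 + 1)) := by gcongr; exact hgautschi.trans (by gcongr)
    _ = √(m + 1) * (√π ^ m * √π) * Gamma (m / 2 + 1) := by ring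

theorem Real.volume_setOf_sq_sub_le_and_not_sq_le (a c : ℝ) :
    volume {t : ℝ | (t - a) ^ 2 ≤ c ∧ ¬ t ^ 2 ≤ c} ≤ ENNReal.ofReal |a| := by
  rcases lt_or_ge c 0 with hc | hc
  · have hempty : {t : ℝ | (t - a) ^ 2 ≤ c ∧ ¬ t ^ 2 ≤ c} = ∅ :=
      eq_empty_of_forall_notMem fun t ht => by nlinarith [sq_nonneg (t - a), ht.1]
    rw [hempty, measure_empty]
    exact zero_le
  simp only [Real.sq_le hc, not_and_or, not_le]
  rcases le_total 0 a with ha | ha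
  · calc _ ≤ volume (Ioc √c (√c + a)) := measure_mono <| by
          rintro t ⟨⟨h₁, h₂⟩, h₃⟩
          constructor <;> rcases h₃ with h₃ | h₃ <;> linarith
      _ = ENNReal.ofReal |a| := by rw [volume_Ioc, abs_of_nonneg ha, add_sub_cancel_left]
  · calc _ ≤ volume (Ico (-√c + a) (-√c)) := measure_mono <| by
          rintro t ⟨⟨h₁, h₂⟩, h₃⟩
          constructor <;> rcases h₃ with h₃ | h₃ <;> linarith
      _ = ENNReal.ofReal |a| := by rw [volume_Ico, abs_of_nonpos ha]; ring_nf

theorem firstBasisVector_succ (m : ℕ) :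
    firstBasisVector (m + 1) = WithLp.toLp 2 (Fin.cons 1 0 : Fin (m + 1) → ℝ) := by
  ext i
  cases i using Fin.cases <;> simp [firstBasisVector]

theorem EuclideanSpace.norm_toLp_cons_sq {m : ℕ} (t : ℝ) (y : Fin m → ℝ) :
    ‖WithLp.toLp 2 (Fin.cons t y : Fin (m + 1) → ℝ)‖ ^ 2 = t ^ 2 + ‖WithLp.toLp 2 y‖ ^ 2 := by
  simp [EuclideanSpace.norm_sq_eq, Fin.sum_univ_succ]

theorem toLp_cons_mem_closedBall_smul_diff_closedBall_iff {m : ℕ} (a t : ℝ) (y : Fin m → ℝ) :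
    WithLp.toLp 2 (Fin.cons t y : Fin (m + 1) → ℝ) ∈
        closedBall (a • firstBasisVector (m + 1)) 1 \ closedBall 0 1 ↔
      (t - a) ^ 2 ≤ 1 - ‖WithLp.toLp 2 y‖ ^ 2 ∧ ¬ t ^ 2 ≤ 1 - ‖WithLp.toLp 2 y‖ ^ 2 := by
  have hsub : WithLp.toLp 2 (Fin.cons t y : Fin (m + 1) → ℝ) - a • firstBasisVector (m + 1) =
      WithLp.toLp 2 (Fin.cons (t - a) y) := by
    ext i
    cases i using Fin.cases <;> simp [firstBasisVector_succ]
  rw [Set.mem_sdiff, mem_closedBall_iff_norm, mem_closedBall_iff_norm, sub_zero, hsub,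
    ← sq_le_one_iff₀ (norm_nonneg _), ← sq_le_one_iff₀ (norm_nonneg _),
    EuclideanSpace.norm_toLp_cons_sq, EuclideanSpace.norm_toLp_cons_sq, le_sub_iff_add_le,
    le_sub_iff_add_le]

theorem EuclideanSpace.volume_closedBall_smul_firstBasisVector_succ_diff_le (m : ℕ) (a : ℝ) :
    volume (closedBall (a • firstBasisVector (m + 1)) 1 \ closedBall 0 1) ≤
      ENNReal.ofReal |a| * volume (closedBall (0 : EuclideanSpace ℝ (Fin m)) 1) := by
  set S := closedBall (a • firstBasisVector (m + 1)) 1 \ closedBall 0 1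
  have hS : MeasurableSet S := measurableSet_closedBall.diff measurableSet_closedBall
  set e : ℝ × (Fin m → ℝ) → EuclideanSpace ℝ (Fin (m + 1)) :=
    fun p => WithLp.toLp 2 (Fin.cons p.1 p.2)
  have he : MeasurePreserving e := by
    convert (PiLp.volume_preserving_toLp (Fin (m + 1))).comp
      (volume_preserving_piFinSuccAbove (fun _ => ℝ) 0).symm using 1
    ext p : 1
    simp [e, MeasurableEquiv.piFinSuccAbove_symm_apply, Fin.consEquiv]
  have hB : MeasurableSet (WithLp.toLp 2 ⁻¹' closedBall (0 : EuclideanSpace ℝ (Fin m)) 1) :=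
    measurableSet_closedBall.preimage (PiLp.volume_preserving_toLp (Fin m)).measurable
  have hfiber (y : Fin m → ℝ) : volume ((fun t => (t, y)) ⁻¹' (e ⁻¹' S)) ≤
      (WithLp.toLp 2 ⁻¹' closedBall 0 1).indicator (fun _ => ENNReal.ofReal |a|) y := by
    have hfiber_eq : (fun t => (t, y)) ⁻¹' (e ⁻¹' S) =
        {t | (t - a) ^ 2 ≤ 1 - ‖WithLp.toLp 2 y‖ ^ 2 ∧ ¬ t ^ 2 ≤ 1 - ‖WithLp.toLp 2 y‖ ^ 2} :=
      ext fun t => toLp_cons_mem_closedBall_smul_diff_closedBall_iff a t y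
    by_cases hy : ‖WithLp.toLp 2 y‖ ≤ 1
    · rw [indicator_of_mem (by simpa using hy), hfiber_eq]
      exact volume_setOf_sq_sub_le_and_not_sq_le a _
    · have hempty : (fun t => (t, y)) ⁻¹' (e ⁻¹' S) = ∅ := by
        rw [hfiber_eq]
        refine eq_empty_of_forall_notMem fun t ht => hy ?_
        nlinarith [sq_nonneg (t - a), ht.1, norm_nonneg (WithLp.toLp 2 y)]
      simp [hempty]
  calc volume S = volume (e ⁻¹' S) := (he.measure_preimage hS.nullMeasurableSet).symm
    _ = ∫⁻ y, volume ((fun t => (t, y)) ⁻¹' (e ⁻¹' S)) := by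
      rw [Measure.volume_eq_prod, Measure.prod_apply_symm (hS.preimage he.measurable)]
    _ ≤ ∫⁻ y, (WithLp.toLp 2 ⁻¹' closedBall 0 1).indicator (fun _ => ENNReal.ofReal |a|) y :=
      lintegral_mono hfiber
    _ = ENNReal.ofReal |a| * volume (closedBall (0 : EuclideanSpace ℝ (Fin m)) 1) := by
      rw [lintegral_indicator_const hB, (PiLp.volume_preserving_toLp (Fin m)).measure_preimage
        measurableSet_closedBall.nullMeasurableSet]

theorem EuclideanSpace.volume_closedBall_smul_firstBasisVector_diff_le (n : ℕ) (a : ℝ) :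
    volume (closedBall (a • firstBasisVector n) 1 \ closedBall 0 1) ≤
      ENNReal.ofReal (|a| * √n) * volume (closedBall (0 : EuclideanSpace ℝ (Fin n)) 1) := by
  rcases n with _ | m
  · simp [Subsingleton.elim (a • firstBasisVector 0) 0]
  calc _ ≤ ENNReal.ofReal |a| * volume (closedBall (0 : EuclideanSpace ℝ (Fin m)) 1) :=
        volume_closedBall_smul_firstBasisVector_succ_diff_le m a
    _ ≤ ENNReal.ofReal |a| * (ENNReal.ofReal √(m + 1) *
          volume (closedBall (0 : EuclideanSpace ℝ (Fin (m + 1))) 1)) := by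
        gcongr
        exact volume_closedBall_le_sqrt_mul_succ m
    _ = _ := by rw [ENNReal.ofReal_mul (abs_nonneg a), mul_assoc, Nat.cast_succ]

theorem ball_translate_difference_volume_ratio_tendsto_zero_general
    (s : ℕ → ℝ)
    (hso : Tendsto (fun n : ℕ => s n * Real.sqrt n) atTop (nhds 0)) :
    Tendsto
      (fun n : ℕ =>
        (volume
            (((fun x : EuclideanSpace ℝ (Fin n) => x + s n • firstBasisVector n) ''
                Metric.closedBall 0 1) \ Metric.closedBall 0 1)).toReal /
          (volume (Metric.closedBall (0 : EuclideanSpace ℝ (Fin n)) 1)).toReal)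
      atTop (nhds 0) := by
  have hbound (n : ℕ) :
      (volume (closedBall (s n • firstBasisVector n) 1 \ closedBall 0 1)).toReal ≤
        |s n| * √n * (volume (closedBall (0 : EuclideanSpace ℝ (Fin n)) 1)).toReal := by
    rw [← ENNReal.toReal_ofReal (by positivity : 0 ≤ |s n| * √n), ← ENNReal.toReal_mul]
    exact ENNReal.toReal_mono
      (ENNReal.mul_ne_top ENNReal.ofReal_ne_top measure_closedBall_lt_top.ne)
      (EuclideanSpace.volume_closedBall_smul_firstBasisVector_diff_le n (s n))
  have hlimit : Tendsto (fun n : ℕ => |s n| * √n) atTop (nhds 0) := by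
    simpa [abs_mul, abs_of_nonneg (sqrt_nonneg _)] using hso.abs
  refine squeeze_zero (fun n => by positivity) (fun n => ?_) hlimit
  have himage : (fun x => x + s n • firstBasisVector n) '' closedBall 0 1 =
      closedBall (s n • firstBasisVector n) 1 := by simp
  rw [himage]
  exact div_le_of_le_mul₀ ENNReal.toReal_nonneg (by positivity) (hbound n)

/-- If `s n > 0` and `s n = o(n^{-1/2})`, i.e. `s n · √n → 0`, then the volume of
`(B_n + s_n e_1) \ B_n` divided by the volume of the unit ball `B_n` tends to `0`. -/
theorem ball_translate_difference_volume_ratio_tendsto_zero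
    (s : ℕ → ℝ) (hs : ∀ n, 0 < s n)
    (hso : Tendsto (fun n : ℕ => s n * Real.sqrt n) atTop (nhds 0)) :
    Tendsto
      (fun n : ℕ =>
        (volume
            (((fun x : EuclideanSpace ℝ (Fin n) => x + s n • firstBasisVector n) ''
                Metric.closedBall 0 1) \ Metric.closedBall 0 1)).toReal /
          (volume (Metric.closedBall (0 : EuclideanSpace ℝ (Fin n)) 1)).toReal)
      atTop (nhds 0) :=
  ball_translate_difference_volume_ratio_tendsto_zero_general s hso
end

section
/- A central extension of a skew-amenable topological group is skew-amenable: if Z is a central closed subgroup of a topological group G such that G/Z is skew-amenable and Z (as a discrete group, being abelian) admits an invariant mean, then G is skew-amenable. -/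
/-- A real-valued function is bounded. -/
def IsBddFun {X : Type*} (f : X → ℝ) : Prop := ∃ C : ℝ, ∀ x, |f x| ≤ C

/-- `f : G → ℝ` is left uniformly continuous: for every `ε > 0` there is a
neighbourhood `V` of the identity with `|f x − f (x v)| < ε` for all `x ∈ G`, `v ∈ V`. -/
def IsLUC (G : Type*) [Group G] [TopologicalSpace G] (f : G → ℝ) : Prop :=
  ∀ ε > (0 : ℝ), ∃ V ∈ nhds (1 : G), ∀ x : G, ∀ v ∈ V, |f x - f (x * v)| < ε

/-- `m` is a left-invariant mean on the class `P` of functions `G → ℝ`: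
normalized, linear on `P`, positive on `P`, and invariant under left translations. -/
def IsLeftInvariantMeanOn (G : Type*) [Group G] (P : (G → ℝ) → Prop)
    (m : (G → ℝ) → ℝ) : Prop :=
  m (fun _ => 1) = 1 ∧
  (∀ f g : G → ℝ, ∀ a b : ℝ, P f → P g →
      m (fun x => a * f x + b * g x) = a * m f + b * m g) ∧
  (∀ f : G → ℝ, P f → (∀ x, 0 ≤ f x) → 0 ≤ m f) ∧
  (∀ f : G → ℝ, P f → ∀ g : G, m (fun x => f (g * x)) = m f)

/-- A topological group is skew-amenable if there is a left-invariant mean on the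
space of bounded left uniformly continuous real-valued functions. -/
def SkewAmenable (G : Type*) [Group G] [TopologicalSpace G] : Prop :=
  ∃ m : (G → ℝ) → ℝ,
    IsLeftInvariantMeanOn G (fun f => IsBddFun f ∧ IsLUC G f) m

/-!
Averaging a bounded function `f` on `G` over the cosets `xZ` with the invariant mean of `Z`
gives a function that is constant on cosets, hence a function on `G ⧸ Z`. Since `Z` is central,
right translation by `v` commutes with this averaging, so left uniform continuity survives it,
and so does left translation. Composing the averaging with a left-invariant mean on `G ⧸ Z`
therefore gives a left-invariant mean on the bounded left uniformly continuous functions on `G`.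
-/

namespace IsBddFun

variable {X Y : Type*}

lemma const (c : ℝ) : IsBddFun fun _ : X => c := ⟨|c|, fun _ => le_rfl⟩

lemma comp {f : X → ℝ} (hf : IsBddFun f) (g : Y → X) : IsBddFun fun y => f (g y) :=
  let ⟨C, hC⟩ := hf; ⟨C, fun y => hC (g y)⟩

lemma sub {f g : X → ℝ} (hf : IsBddFun f) (hg : IsBddFun g) : IsBddFun fun x => f x - g x :=
  let ⟨C, hC⟩ := hf
  let ⟨D, hD⟩ := hg
  ⟨C + D, fun x => (abs_sub _ _).trans (add_le_add (hC x) (hD x))⟩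

end IsBddFun

namespace IsLeftInvariantMeanOn

variable {G : Type*} [Group G] {P : (G → ℝ) → Prop} {m : (G → ℝ) → ℝ}

lemma map_sub (hm : IsLeftInvariantMeanOn G P m) {f g : G → ℝ} (hf : P f) (hg : P g) :
    m (fun x => f x - g x) = m f - m g := by
  have := hm.2.1 f g 1 (-1) hf hg
  simp only [one_mul, neg_one_mul, ← sub_eq_add_neg] at this
  exact this

lemma map_const (hm : IsLeftInvariantMeanOn G P m) (h1 : P fun _ => 1) (c : ℝ) :
    m (fun _ => c) = c := by
  have := hm.2.1 _ _ c 0 h1 h1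
  simp only [mul_one, add_zero, hm.1] at this
  exact this

lemma mono (hm : IsLeftInvariantMeanOn G IsBddFun m) {f g : G → ℝ} (hf : IsBddFun f)
    (hg : IsBddFun g) (hfg : ∀ x, f x ≤ g x) : m f ≤ m g := by
  have := hm.2.2.1 _ (hg.sub hf) fun x => sub_nonneg.2 (hfg x)
  rw [hm.map_sub hg hf] at this
  linarith

lemma abs_le (hm : IsLeftInvariantMeanOn G IsBddFun m) {f : G → ℝ} {C : ℝ}
    (hC : ∀ x, |f x| ≤ C) : |m f| ≤ C := by
  have hf : IsBddFun f := ⟨C, hC⟩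
  have hconst := hm.map_const (IsBddFun.const 1)
  refine _root_.abs_le.2 ⟨?_, ?_⟩
  · simpa [hconst] using hm.mono (IsBddFun.const (-C)) hf fun x => (_root_.abs_le.1 (hC x)).1
  · simpa [hconst] using hm.mono hf (IsBddFun.const C) fun x => (_root_.abs_le.1 (hC x)).2

end IsLeftInvariantMeanOn

section

variable {G : Type*} [Group G] {Z : Subgroup G}

lemma apply_out_mk {α : Type*} {F : G → α} (hF : ∀ x, ∀ z ∈ Z, F (x * z) = F x) (x : G) :
    F (QuotientGroup.mk x : G ⧸ Z).out = F x := by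
  obtain ⟨z, hz⟩ := QuotientGroup.mk_out_eq_mul Z x
  rw [hz, hF x z z.2]

lemma IsLUC.comp_out [TopologicalSpace G] [Z.Normal] [SeparatelyContinuousMul G] {F : G → ℝ}
    (hF : ∀ x, ∀ z ∈ Z, F (x * z) = F x) (hLUC : IsLUC G F) :
    IsLUC (G ⧸ Z) fun q => F q.out := by
  intro ε hε
  obtain ⟨V, hV, hVF⟩ := hLUC ε hε
  refine ⟨QuotientGroup.mk '' V, QuotientGroup.isOpenMap_coe.image_mem_nhds hV, ?_⟩
  rintro q _ ⟨v, hv, rfl⟩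
  induction q using QuotientGroup.induction_on with | H x => ?_
  simpa only [← QuotientGroup.mk_mul, apply_out_mk hF] using hVF x v hv

end

section FiberAverage

variable {G : Type*} [Group G] (Z : Subgroup G) (m : (Z → ℝ) → ℝ)

def fiberAverage (f : G → ℝ) (x : G) : ℝ := m fun z => f (x * z)

variable {Z m}

lemma fiberAverage_mul_of_mem (hm : IsLeftInvariantMeanOn Z IsBddFun m) {f : G → ℝ}
    (hf : IsBddFun f) (x : G) {z : G} (hz : z ∈ Z) :
    fiberAverage Z m f (x * z) = fiberAverage Z m f x := by
  have := hm.2.2.2 _ (hf.comp fun w : Z => x * w) ⟨z, hz⟩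
  simp only [Subgroup.coe_mul, ← mul_assoc] at this
  exact this

lemma fiberAverage_out_mk (hm : IsLeftInvariantMeanOn Z IsBddFun m) {f : G → ℝ}
    (hf : IsBddFun f) (x : G) :
    fiberAverage Z m f (QuotientGroup.mk x : G ⧸ Z).out = fiberAverage Z m f x :=
  apply_out_mk (fun y _ hz => fiberAverage_mul_of_mem hm hf y hz) x

lemma fiberAverage_comp_mul_left (f : G → ℝ) (g x : G) :
    fiberAverage Z m (fun y => f (g * y)) x = fiberAverage Z m f (g * x) := by
  simp only [fiberAverage, mul_assoc]

lemma fiberAverage_const (hm : IsLeftInvariantMeanOn Z IsBddFun m) (c : ℝ) (x : G) :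
    fiberAverage Z m (fun _ => c) x = c :=
  hm.map_const (IsBddFun.const 1) c

lemma fiberAverage_linear (hm : IsLeftInvariantMeanOn Z IsBddFun m) {f g : G → ℝ}
    (hf : IsBddFun f) (hg : IsBddFun g) (a b : ℝ) (x : G) :
    fiberAverage Z m (fun y => a * f y + b * g y) x =
      a * fiberAverage Z m f x + b * fiberAverage Z m g x :=
  hm.2.1 _ _ a b (hf.comp _) (hg.comp _)

lemma fiberAverage_nonneg (hm : IsLeftInvariantMeanOn Z IsBddFun m) {f : G → ℝ}
    (hf : IsBddFun f) (hf₀ : ∀ x, 0 ≤ f x) (x : G) : 0 ≤ fiberAverage Z m f x :=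
  hm.2.2.1 _ (hf.comp _) fun _ => hf₀ _

lemma isBddFun_fiberAverage (hm : IsLeftInvariantMeanOn Z IsBddFun m) {f : G → ℝ}
    (hf : IsBddFun f) : IsBddFun (fiberAverage Z m f) :=
  let ⟨C, hC⟩ := hf
  ⟨C, fun _ => hm.abs_le fun _ => hC _⟩

lemma isLUC_fiberAverage [TopologicalSpace G] (hZ : Z ≤ Subgroup.center G)
    (hm : IsLeftInvariantMeanOn Z IsBddFun m) {f : G → ℝ} (hf : IsBddFun f)
    (hLUC : IsLUC G f) : IsLUC G (fiberAverage Z m f) := by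
  intro ε hε
  obtain ⟨V, hV, hVf⟩ := hLUC (ε / 2) (half_pos hε)
  refine ⟨V, hV, fun x v hv => ?_⟩
  have hcomm : ∀ z : Z, x * v * z = x * z * v := fun z => by
    rw [mul_assoc, mul_assoc, (Subgroup.mem_center_iff.1 (hZ z.2)) v]
  have hdiff : fiberAverage Z m f x - fiberAverage Z m f (x * v) =
      m fun z => f (x * z) - f (x * z * v) := by
    simp only [fiberAverage, ← hcomm]
    exact (hm.map_sub (hf.comp _) (hf.comp _)).symm
  calc |fiberAverage Z m f x - fiberAverage Z m f (x * v)|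
      ≤ ε / 2 := hdiff ▸ hm.abs_le fun z => (hVf _ v hv).le
    _ < ε := half_lt_self hε

end FiberAverage

theorem skewAmenable_of_central_extension_general (G : Type*) [Group G] [TopologicalSpace G]
    [IsTopologicalGroup G] (Z : Subgroup G) [Z.Normal]
    (hcentral : Z ≤ Subgroup.center G)
    (hZmean : ∃ m : (Z → ℝ) → ℝ,
      IsLeftInvariantMeanOn Z (fun f => IsBddFun f) m)
    (hquot : SkewAmenable (G ⧸ Z)) :
    SkewAmenable G := by
  obtain ⟨mZ, hmZ⟩ := hZmean
  obtain ⟨mQ, hQ1, hQlin, hQpos, hQinv⟩ := hquot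
  let E (f : G → ℝ) (q : G ⧸ Z) : ℝ := fiberAverage Z mZ f q.out
  have hE : ∀ f, IsBddFun f ∧ IsLUC G f → IsBddFun (E f) ∧ IsLUC (G ⧸ Z) (E f) :=
    fun f ⟨hb, hl⟩ => ⟨(isBddFun_fiberAverage hmZ hb).comp _,
      (isLUC_fiberAverage hcentral hmZ hb hl).comp_out fun x _ hz =>
        fiberAverage_mul_of_mem hmZ hb x hz⟩
  refine ⟨fun f => mQ (E f), ?_, fun f g a b hf hg => ?_, fun f hf hf₀ => ?_, fun f hf g => ?_⟩
  · simpa only [E, fiberAverage_const hmZ] using hQ1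
  · simpa only [E, fiberAverage_linear hmZ hf.1 hg.1] using hQlin _ _ a b (hE f hf) (hE g hg)
  · exact hQpos _ (hE f hf) fun q => fiberAverage_nonneg hmZ hf.1 hf₀ _
  · have htrans : E (fun x => f (g * x)) = fun q => E f (QuotientGroup.mk g * q) := by
      funext q
      induction q using QuotientGroup.induction_on with | H x => ?_
      simp only [E, ← QuotientGroup.mk_mul]
      rw [fiberAverage_out_mk hmZ (hf.1.comp (g * ·)), fiberAverage_out_mk hmZ hf.1,
        fiberAverage_comp_mul_left]
    show mQ (E _) = mQ (E f)
    rw [htrans]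
    exact hQinv _ (hE f hf) _

/-- A central extension of a skew-amenable topological group is skew-amenable:
if `Z` is a closed central subgroup of `G`, the quotient `G/Z` is skew-amenable,
and `Z` (as a discrete group) admits an invariant mean on all bounded functions,
then `G` is skew-amenable. -/
theorem skewAmenable_of_central_extension (G : Type*) [Group G] [TopologicalSpace G]
    [IsTopologicalGroup G] (Z : Subgroup G) [Z.Normal]
    (hcentral : Z ≤ Subgroup.center G) (hclosed : IsClosed (Z : Set G))
    (hZmean : ∃ m : (Z → ℝ) → ℝ,
      IsLeftInvariantMeanOn Z (fun f => IsBddFun f) m)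
    (hquot : SkewAmenable (G ⧸ Z)) :
    SkewAmenable G :=
  skewAmenable_of_central_extension_general G Z hcentral hZmean hquot
end

section
/- Let f be a 1-Lipschitz real-valued function on the closed unit ball B_m of ℝ^m (with normalized Lebesgue measure ν) with median 0. Then for every ε > 0, ν{x ∈ B_m : |f(x)| > ε} ≤ 2·exp(−c·ε²·m) for some universal constant c > 0. -/
open MeasureTheory

/-- The Lebesgue measure on the closed Euclidean unit ball of `ℝ^m`, normalized to a
probability measure. -/
noncomputable def unitBallUniform (m : ℕ) : Measure (EuclideanSpace ℝ (Fin m)) :=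
  (volume (Metric.closedBall (0 : EuclideanSpace ℝ (Fin m)) 1))⁻¹ •
    volume.restrict (Metric.closedBall (0 : EuclideanSpace ℝ (Fin m)) 1)

/-!
Prékopa–Leindler with weights `1/2, 1/2` — if `f x * g y ≤ h ((x + y) / 2) ^ 2` then
`∫ f * ∫ g ≤ (∫ h) ^ 2` — holds on `ℝ` by integrating the one-dimensional Brunn–Minkowski
inequality over superlevel sets, and tensorizes to `ℝ^m` by Fubini. Applied to indicators of two
subsets `A`, `B` of the unit ball at distance `≥ ε`, whose midpoints lie in the ball of radius
`√(1 - ε² / 4)` by the parallelogram law, it gives `ν A * ν B ≤ (1 - ε² / 4) ^ m ≤ exp (-ε² m / 4)`.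
For `f` with median `0` take `A = {f ≤ 0}`, so that `ν A ≥ 1/2`, and `B = {f ≥ ε}`; doing the
same for `-f` bounds the two tails by `4 exp (-ε² m / 4)`, which is at most `2 exp (-ε² m / 8)`
whenever the latter is below `1`.
-/

open Set Metric
open scoped ENNReal NNReal

theorem Real.volume_add_volume_le_of_isCompact {K L U : Set ℝ} (hK : IsCompact K)
    (hL : IsCompact L) (hK₀ : K.Nonempty) (hL₀ : L.Nonempty)
    (hKLU : ∀ s ∈ K, ∀ t ∈ L, (2 : ℝ)⁻¹ * (s + t) ∈ U) :
    volume K + volume L ≤ 2 * volume U := by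
  obtain ⟨a, haK, ha⟩ := hK.exists_isMaxOn hK₀ continuousOn_id
  obtain ⟨b, hbL, hb⟩ := hL.exists_isMinOn hL₀ continuousOn_id
  -- `X = (K + b) / 2` and `Y = (a + L) / 2` lie in `U` and meet at most in `(a + b) / 2`.
  set X : Set ℝ := (fun z => 2 * z) ⁻¹' ((· - b) ⁻¹' K)
  set Y : Set ℝ := (fun z => 2 * z) ⁻¹' ((· - a) ⁻¹' L)
  have hX : volume X = 2⁻¹ * volume K := by
    simp [X, Real.volume_preimage_mul_left, measure_preimage_add_right, sub_eq_add_neg]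
  have hY : volume Y = 2⁻¹ * volume L := by
    simp [Y, Real.volume_preimage_mul_left, measure_preimage_add_right, sub_eq_add_neg]
  have hXY : AEDisjoint volume X Y := by
    refine measure_mono_null (t := {(2 : ℝ)⁻¹ * (a + b)}) ?_ (measure_singleton _)
    rintro z ⟨hzX, hzY⟩
    have h₁ : 2 * z - b ≤ a := ha hzX
    have h₂ : b ≤ 2 * z - a := hb hzY
    simp only [mem_singleton_iff]
    linarith
  have hXU : X ∪ Y ⊆ U := by
    rintro z (hz | hz)
    · simpa [mul_sub, ← mul_assoc] using hKLU _ hz b hbL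
    · simpa [mul_sub, ← mul_assoc] using hKLU a haK _ hz
  have hYm : MeasurableSet Y :=
    hL.isClosed.measurableSet.preimage (by fun_prop) |>.preimage (by fun_prop)
  calc volume K + volume L = 2 * (volume X + volume Y) := by
        rw [hX, hY, mul_add, ← mul_assoc, ← mul_assoc, ENNReal.mul_inv_cancel two_ne_zero
          ENNReal.ofNat_ne_top, one_mul, one_mul]
    _ = 2 * volume (X ∪ Y) := by rw [measure_union₀ hYm.nullMeasurableSet hXY]
    _ ≤ 2 * volume U := by gcongr

theorem Real.volume_add_volume_le {S T U : Set ℝ} (hS : MeasurableSet S)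
    (hT : MeasurableSet T) (hS₀ : S.Nonempty) (hT₀ : T.Nonempty)
    (hSTU : ∀ s ∈ S, ∀ t ∈ T, (2 : ℝ)⁻¹ * (s + t) ∈ U) :
    volume S + volume T ≤ 2 * volume U := by
  obtain ⟨p, hp⟩ := hS₀
  obtain ⟨q, hq⟩ := hT₀
  rw [hS.measure_eq_iSup_isCompact, hT.measure_eq_iSup_isCompact]
  simp only [iSup_and']
  refine ENNReal.biSup_add_biSup_le' ⟨∅, empty_subset _, isCompact_empty⟩
    ⟨∅, empty_subset _, isCompact_empty⟩ fun K ⟨hKS, hK⟩ L ⟨hLT, hL⟩ => ?_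
  calc volume K + volume L ≤ volume (insert p K) + volume (insert q L) := by
        gcongr <;> exact subset_insert _ _
    _ ≤ 2 * volume U :=
        volume_add_volume_le_of_isCompact (hK.insert p) (hL.insert q) (insert_nonempty _ _)
          (insert_nonempty _ _) fun s hs t ht => hSTU s (insert_subset hp hKS hs) t
            (insert_subset hq hLT ht)

theorem setLIntegral_Ioo_measure_lt_eq_lintegral_min {α : Type*} [MeasurableSpace α]
    (μ : Measure α) {f : α → ℝ≥0∞} (hf : Measurable f) :
    ∫⁻ t in Ioo (0 : ℝ) 1, μ {x | ENNReal.ofReal t < f x} = ∫⁻ x, min (f x) 1 ∂μ := by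
  have hne : ∀ x, min (f x) 1 ≠ ∞ := fun x => (min_lt_of_right_lt ENNReal.one_lt_top).ne
  have hlt : ∀ t ∈ Ioo (0 : ℝ) 1,
      {x | t < (min (f x) 1).toReal} = {x | ENNReal.ofReal t < f x} := by
    intro t ⟨ht₀, ht₁⟩
    ext x
    simp [← ENNReal.ofReal_lt_iff_lt_toReal ht₀.le (hne x), ENNReal.ofReal_lt_one.mpr ht₁]
  have hge : ∀ t ∈ Ici (1 : ℝ), {x | t < (min (f x) 1).toReal} = ∅ := by
    intro t (ht : 1 ≤ t)
    ext x
    simp [← ENNReal.ofReal_lt_iff_lt_toReal (zero_le_one.trans ht) (hne x), ht]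
  rw [← lintegral_congr fun x => ENNReal.ofReal_toReal (hne x),
    lintegral_eq_lintegral_meas_lt μ (ae_of_all _ fun _ => ENNReal.toReal_nonneg)
      (hf.min measurable_const).ennreal_toReal.aemeasurable,
    ← Ioo_union_Ici_eq_Ioi zero_lt_one,
    lintegral_union measurableSet_Ici ((Iio_disjoint_Ici le_rfl).mono_left Ioo_subset_Iio_self),
    setLIntegral_congr_fun measurableSet_Ici (g := fun _ => 0) fun t ht => by simp [hge t ht],
    lintegral_zero, add_zero]
  exact setLIntegral_congr_fun measurableSet_Ioo fun t ht => by rw [hlt t ht]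

theorem measurable_measure_setOf_ofReal_lt {α : Type*} [MeasurableSpace α] (μ : Measure α)
    (f : α → ℝ≥0∞) : Measurable fun t : ℝ => μ {x | ENNReal.ofReal t < f x} :=
  Antitone.measurable fun _ _ hst => measure_mono fun _ hx =>
    (ENNReal.ofReal_le_ofReal hst).trans_lt hx

theorem Real.lintegral_add_lintegral_le_of_iSup_eq_one {f g h : ℝ → ℝ≥0∞}
    (hf : Measurable f) (hg : Measurable g) (hh : Measurable h) (hf₁ : ⨆ x, f x = 1)
    (hg₁ : ⨆ x, g x = 1)
    (hfgh : ∀ x y, f x * g y ≤ h ((2 : ℝ)⁻¹ * (x + y)) ^ 2) :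
    (∫⁻ x, f x) + ∫⁻ x, g x ≤ 2 * ∫⁻ x, h x := by
  -- The superlevel sets at height `t < 1` are nonempty and their midpoints lie in that of `h`.
  have hlevel : ∀ t ∈ Ioo (0 : ℝ) 1, volume {x | ENNReal.ofReal t < f x} +
      volume {x | ENNReal.ofReal t < g x} ≤ 2 * volume {x | ENNReal.ofReal t < h x} := by
    intro t ⟨ht₀, ht₁⟩
    have ht : ENNReal.ofReal t < 1 := ENNReal.ofReal_lt_one.mpr ht₁
    obtain ⟨x₀, hx₀⟩ := lt_iSup_iff.mp (hf₁ ▸ ht)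
    obtain ⟨y₀, hy₀⟩ := lt_iSup_iff.mp (hg₁ ▸ ht)
    refine volume_add_volume_le (measurableSet_lt measurable_const hf)
      (measurableSet_lt measurable_const hg) ⟨x₀, hx₀⟩ ⟨y₀, hy₀⟩ fun x hx y hy => ?_
    refine lt_of_pow_lt_pow_left' 2 (lt_of_lt_of_le ?_ (hfgh x y))
    exact sq (ENNReal.ofReal t) ▸ ENNReal.mul_lt_mul hx hy
  have hf_eq := setLIntegral_Ioo_measure_lt_eq_lintegral_min volume hf
  have hg_eq := setLIntegral_Ioo_measure_lt_eq_lintegral_min volume hg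
  simp only [min_eq_left (hf₁ ▸ le_iSup f _), min_eq_left (hg₁ ▸ le_iSup g _)] at hf_eq hg_eq
  calc (∫⁻ x, f x) + ∫⁻ x, g x
        = ∫⁻ t in Ioo (0 : ℝ) 1,
            (volume {x | ENNReal.ofReal t < f x} + volume {x | ENNReal.ofReal t < g x}) := by
        rw [lintegral_add_left (measurable_measure_setOf_ofReal_lt _ _), hf_eq, hg_eq]
    _ ≤ ∫⁻ t in Ioo (0 : ℝ) 1, 2 * volume {x | ENNReal.ofReal t < h x} :=
        setLIntegral_mono ((measurable_measure_setOf_ofReal_lt _ _).const_mul 2) hlevel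
    _ = 2 * ∫⁻ x, min (h x) 1 := by
        rw [lintegral_const_mul 2 (measurable_measure_setOf_ofReal_lt _ _),
          setLIntegral_Ioo_measure_lt_eq_lintegral_min volume hh]
    _ ≤ 2 * ∫⁻ x, h x := by gcongr with x; exact min_le_left _ _

theorem ENNReal.mul_le_sq_of_add_le_two_mul {a b c : ℝ≥0∞} (h : a + b ≤ 2 * c) :
    a * b ≤ c ^ 2 := by
  rcases eq_or_ne c ∞ with rfl | hc
  · simp
  have ha : a ≠ ∞ := ne_top_of_le_ne_top (by finiteness) (le_self_add.trans h)
  have hb : b ≠ ∞ := ne_top_of_le_ne_top (by finiteness) (le_add_self.trans h)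
  lift a to ℝ≥0 using ha
  lift b to ℝ≥0 using hb
  lift c to ℝ≥0 using hc
  norm_cast at h ⊢
  rw [← NNReal.coe_le_coe] at h ⊢
  push_cast at h ⊢
  nlinarith [sq_nonneg ((a : ℝ) - b), a.coe_nonneg, b.coe_nonneg]

theorem Real.lintegral_mul_lintegral_le_of_iSup_ne_top {f g h : ℝ → ℝ≥0∞}
    (hf : Measurable f) (hg : Measurable g) (hh : Measurable h) (hf_top : ⨆ x, f x ≠ ∞)
    (hg_top : ⨆ x, g x ≠ ∞)
    (hfgh : ∀ x y, f x * g y ≤ h ((2 : ℝ)⁻¹ * (x + y)) ^ 2) :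
    (∫⁻ x, f x) * ∫⁻ x, g x ≤ (∫⁻ x, h x) ^ 2 := by
  rcases eq_or_ne (⨆ x, f x) 0 with hf₀ | hf₀
  · simp [ENNReal.iSup_eq_zero.mp hf₀]
  rcases eq_or_ne (⨆ x, g x) 0 with hg₀ | hg₀
  · simp [ENNReal.iSup_eq_zero.mp hg₀]
  -- Normalize `f` and `g` to have supremum `1`, and `h` by the geometric mean of the suprema.
  set a := ⨆ x, f x
  set b := ⨆ x, g x
  set c : ℝ≥0∞ := ↑(NNReal.sqrt (a.toNNReal * b.toNNReal))
  have hc : c ^ 2 = a * b := by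
    rw [← ENNReal.coe_pow, NNReal.sq_sqrt, ENNReal.coe_mul, ENNReal.coe_toNNReal hf_top,
      ENNReal.coe_toNNReal hg_top]
  have hab₀ : a * b ≠ 0 := mul_ne_zero hf₀ hg₀
  have hab_top : a * b ≠ ∞ := ENNReal.mul_ne_top hf_top hg_top
  have hinv : a⁻¹ * b⁻¹ = (a * b)⁻¹ := (ENNReal.mul_inv (.inl hf₀) (.inl hf_top)).symm
  have hc_inv : (c⁻¹) ^ 2 = (a * b)⁻¹ := by rw [← ENNReal.inv_pow, hc]
  have hnorm := lintegral_add_lintegral_le_of_iSup_eq_one (f := fun x => f x * a⁻¹)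
    (g := fun x => g x * b⁻¹) (h := fun x => h x * c⁻¹) (hf.mul_const _) (hg.mul_const _)
    (hh.mul_const _) (by rw [← ENNReal.iSup_mul, ENNReal.mul_inv_cancel hf₀ hf_top])
    (by rw [← ENNReal.iSup_mul, ENNReal.mul_inv_cancel hg₀ hg_top]) fun x y => by
      rw [mul_mul_mul_comm, hinv, mul_pow, hc_inv]
      exact mul_le_mul_left (hfgh x y) _
  have hprod := ENNReal.mul_le_sq_of_add_le_two_mul hnorm
  rw [lintegral_mul_const _ hf, lintegral_mul_const _ hg, lintegral_mul_const _ hh,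
    mul_mul_mul_comm, hinv, mul_pow, hc_inv] at hprod
  exact (ENNReal.mul_le_mul_iff_left (ENNReal.inv_ne_zero.mpr hab_top)
    (ENNReal.inv_ne_top.mpr hab₀)).mp hprod

theorem ENNReal.iSup_min_natCast (a : ℝ≥0∞) : ⨆ n : ℕ, min a n = a := by
  rw [← inf_iSup_eq, ENNReal.iSup_natCast, inf_top_eq]

def HasMidpointPrekopaLeindler (α : Type*) [MeasureSpace α] [Add α] [SMul ℝ α] : Prop :=
  ∀ f g h : α → ℝ≥0∞, Measurable f → Measurable g → Measurable h →
    (∀ x y, f x * g y ≤ h ((2 : ℝ)⁻¹ • (x + y)) ^ 2) →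
    (∫⁻ x, f x) * (∫⁻ x, g x) ≤ (∫⁻ x, h x) ^ 2

theorem Real.hasMidpointPrekopaLeindler : HasMidpointPrekopaLeindler ℝ := by
  intro f g h hf hg hh hfgh
  have htrunc : ∀ {φ : ℝ → ℝ≥0∞}, Measurable φ →
      ∫⁻ x, φ x = ⨆ n : ℕ, ∫⁻ x, min (φ x) n := fun hφ => by
    simp_rw [← lintegral_iSup (fun n => hφ.min measurable_const)
      (fun m n hmn x => min_le_min_left _ (Nat.cast_le.mpr hmn)), ENNReal.iSup_min_natCast]
  have hbdd : ∀ (φ : ℝ → ℝ≥0∞) (n : ℕ), ⨆ x, min (φ x) n ≠ ∞ := fun _ n =>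
    ne_top_of_le_ne_top (ENNReal.natCast_ne_top n) (iSup_le fun _ => min_le_right _ _)
  rw [htrunc hf, htrunc hg, ENNReal.iSup_mul]
  refine iSup_le fun m => ?_
  rw [ENNReal.mul_iSup]
  exact iSup_le fun n => lintegral_mul_lintegral_le_of_iSup_ne_top (hf.min measurable_const)
    (hg.min measurable_const) hh (hbdd f m) (hbdd g n) fun x y =>
      (mul_le_mul' (min_le_left _ _) (min_le_left _ _)).trans (hfgh x y)

namespace HasMidpointPrekopaLeindler

variable {α β : Type*} [MeasureSpace α] [Add α] [SMul ℝ α] [MeasureSpace β] [Add β] [SMul ℝ β]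

theorem prod [SFinite (volume : Measure β)] (hα : HasMidpointPrekopaLeindler α)
    (hβ : HasMidpointPrekopaLeindler β) : HasMidpointPrekopaLeindler (α × β) := by
  intro f g h hf hg hh hfgh
  rw [Measure.volume_eq_prod, lintegral_prod f hf.aemeasurable,
    lintegral_prod g hg.aemeasurable, lintegral_prod h hh.aemeasurable]
  refine hα _ _ _ hf.lintegral_prod_right' hg.lintegral_prod_right'
    hh.lintegral_prod_right'
    fun x₁ x₂ => hβ _ _ _ (hf.comp measurable_prodMk_left) (hg.comp measurable_prodMk_left)
      (hh.comp measurable_prodMk_left) fun y₁ y₂ => ?_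
  simpa [Prod.smul_def] using hfgh (x₁, y₁) (x₂, y₂)

theorem of_measurePreserving (e : α ≃ᵐ β) (he : MeasurePreserving e volume volume)
    (he_mid : ∀ x y : α, e ((2 : ℝ)⁻¹ • (x + y)) = (2 : ℝ)⁻¹ • (e x + e y))
    (hα : HasMidpointPrekopaLeindler α) : HasMidpointPrekopaLeindler β := by
  intro f g h hf hg hh hfgh
  have := hα (fun x => f (e x)) (fun x => g (e x)) (fun x => h (e x)) (hf.comp e.measurable)
    (hg.comp e.measurable) (hh.comp e.measurable) fun x y => by
      simpa only [he_mid] using hfgh (e x) (e y)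
  rwa [he.lintegral_comp hf, he.lintegral_comp hg, he.lintegral_comp hh] at this

theorem volume_mul_volume_le (hα : HasMidpointPrekopaLeindler α) {A B C : Set α}
    (hA : MeasurableSet A) (hB : MeasurableSet B) (hC : MeasurableSet C)
    (hABC : ∀ a ∈ A, ∀ b ∈ B, (2 : ℝ)⁻¹ • (a + b) ∈ C) :
    volume A * volume B ≤ volume C ^ 2 := by
  have := hα (A.indicator 1) (B.indicator 1) (C.indicator 1) (measurable_one.indicator hA)
    (measurable_one.indicator hB) (measurable_one.indicator hC) fun x y => by
      by_cases hx : x ∈ A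
      · by_cases hy : y ∈ B
        · simp [hx, hy, hABC x hx y hy]
        · simp [hy]
      · simp [hx]
  simpa [lintegral_indicator_one hA, lintegral_indicator_one hB, lintegral_indicator_one hC]
    using this

end HasMidpointPrekopaLeindler

theorem hasMidpointPrekopaLeindler_pi (n : ℕ) : HasMidpointPrekopaLeindler (Fin n → ℝ) := by
  induction n with
  | zero =>
    intro f g h _ _ _ hfgh
    have hvol : volume (univ : Set (Fin 0 → ℝ)) = 1 := by simp [volume_pi]
    simp only [lintegral_unique, hvol, mul_one]
    convert hfgh 0 0
  | succ n ih =>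
    refine (Real.hasMidpointPrekopaLeindler.prod ih).of_measurePreserving
      (MeasurableEquiv.piFinSuccAbove (fun _ => ℝ) 0).symm
      (measurePreserving_piFinSuccAbove (fun _ => volume) 0).symm fun x y => ?_
    ext j
    cases j using Fin.cases <;> simp [Fin.insertNthEquiv, mul_add]

theorem EuclideanSpace.hasMidpointPrekopaLeindler (n : ℕ) :
    HasMidpointPrekopaLeindler (EuclideanSpace ℝ (Fin n)) :=
  (hasMidpointPrekopaLeindler_pi n).of_measurePreserving (MeasurableEquiv.toLp 2 (Fin n → ℝ))
    (EuclideanSpace.volume_preserving_symm_measurableEquiv_toLp (Fin n)).symm fun _ _ => rfl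

theorem norm_half_smul_add_sq_le {E : Type*} [NormedAddCommGroup E] [InnerProductSpace ℝ E]
    {x y : E} {ε : ℝ} (hx : ‖x‖ ≤ 1) (hy : ‖y‖ ≤ 1) (hε : 0 ≤ ε) (hxy : ε ≤ dist x y) :
    ‖(2 : ℝ)⁻¹ • (x + y)‖ ^ 2 ≤ 1 - ε ^ 2 / 4 := by
  have hpar : ‖x + y‖ ^ 2 + ‖x - y‖ ^ 2 = 2 * (‖x‖ ^ 2 + ‖y‖ ^ 2) :=
    parallelogram_law_with_norm ℝ x y
  rw [dist_eq_norm] at hxy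
  rw [norm_smul, mul_pow, Real.norm_of_nonneg (by norm_num)]
  nlinarith [norm_nonneg x, norm_nonneg y, mul_self_le_mul_self hε hxy]

theorem EuclideanSpace.volume_mul_volume_le_of_le_dist {m : ℕ}
    {A B : Set (EuclideanSpace ℝ (Fin m))} (hA : MeasurableSet A) (hB : MeasurableSet B)
    (hA₁ : A ⊆ closedBall 0 1) (hB₁ : B ⊆ closedBall 0 1) {ε : ℝ} (hε : 0 ≤ ε)
    (hAB : ∀ a ∈ A, ∀ b ∈ B, ε ≤ dist a b) :
    volume A * volume B ≤ ENNReal.ofReal (Real.exp (-(ε ^ 2 * m / 4))) *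
      volume (closedBall (0 : EuclideanSpace ℝ (Fin m)) 1) ^ 2 := by
  rcases A.eq_empty_or_nonempty with rfl | ⟨a₀, ha₀⟩
  · simp
  rcases B.eq_empty_or_nonempty with rfl | ⟨b₀, hb₀⟩
  · simp
  have hmid : ∀ a ∈ A, ∀ b ∈ B, ‖(2 : ℝ)⁻¹ • (a + b)‖ ^ 2 ≤ 1 - ε ^ 2 / 4 := fun a ha b hb =>
    norm_half_smul_add_sq_le (mem_closedBall_zero_iff.mp (hA₁ ha))
      (mem_closedBall_zero_iff.mp (hB₁ hb)) hε (hAB a ha b hb)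
  have hr₀ : 0 ≤ 1 - ε ^ 2 / 4 := (sq_nonneg _).trans (hmid a₀ ha₀ b₀ hb₀)
  have hmid_mem : ∀ a ∈ A, ∀ b ∈ B,
      (2 : ℝ)⁻¹ • (a + b) ∈ closedBall (0 : EuclideanSpace ℝ (Fin m)) √(1 - ε ^ 2 / 4) :=
    fun a ha b hb => mem_closedBall_zero_iff.mpr (Real.le_sqrt_of_sq_le (hmid a ha b hb))
  set V := volume (closedBall (0 : EuclideanSpace ℝ (Fin m)) 1)
  calc volume A * volume B
      ≤ volume (closedBall (0 : EuclideanSpace ℝ (Fin m)) √(1 - ε ^ 2 / 4)) ^ 2 :=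
        (EuclideanSpace.hasMidpointPrekopaLeindler m).volume_mul_volume_le hA hB
          measurableSet_closedBall hmid_mem
    _ = ENNReal.ofReal ((1 - ε ^ 2 / 4) ^ m) * V ^ 2 := by
        rw [Measure.addHaar_closedBall' _ _ (Real.sqrt_nonneg _), finrank_euclideanSpace_fin,
          mul_pow, ← ENNReal.ofReal_pow (by positivity), ← pow_mul, mul_comm m, pow_mul,
          Real.sq_sqrt hr₀]
    _ ≤ ENNReal.ofReal (Real.exp (-(ε ^ 2 * m / 4))) * V ^ 2 := by
        gcongr
        calc (1 - ε ^ 2 / 4) ^ m ≤ Real.exp (-(ε ^ 2 / 4)) ^ m :=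
              pow_le_pow_left₀ hr₀ (Real.one_sub_le_exp_neg _) m
          _ = Real.exp (-(ε ^ 2 * m / 4)) := by rw [← Real.exp_nat_mul]; ring_nf

namespace unitBallUniform

variable {m : ℕ}

theorem apply (S : Set (EuclideanSpace ℝ (Fin m))) :
    unitBallUniform m S = (volume (closedBall (0 : EuclideanSpace ℝ (Fin m)) 1))⁻¹ *
      volume (S ∩ closedBall 0 1) := by
  rw [unitBallUniform, Measure.smul_apply, Measure.restrict_apply' measurableSet_closedBall,
    smul_eq_mul]

instance : IsProbabilityMeasure (unitBallUniform m) :=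
  ⟨by rw [apply, univ_inter, ENNReal.inv_mul_cancel (measure_closedBall_pos _ _ one_pos).ne'
    measure_closedBall_lt_top.ne]⟩

theorem closedBall_inter (S : Set (EuclideanSpace ℝ (Fin m))) :
    unitBallUniform m (closedBall 0 1 ∩ S) = unitBallUniform m S := by
  rw [apply, apply, inter_right_comm, inter_self, inter_comm S]

theorem mul_le_of_le_dist {A B : Set (EuclideanSpace ℝ (Fin m))}
    (hA : MeasurableSet A) (hB : MeasurableSet B) (hA₁ : A ⊆ closedBall 0 1)
    (hB₁ : B ⊆ closedBall 0 1) {ε : ℝ} (hε : 0 ≤ ε) (hAB : ∀ a ∈ A, ∀ b ∈ B, ε ≤ dist a b) :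
    unitBallUniform m A * unitBallUniform m B ≤
      ENNReal.ofReal (Real.exp (-(ε ^ 2 * m / 4))) := by
  set V := volume (closedBall (0 : EuclideanSpace ℝ (Fin m)) 1)
  have hV₀ : V ≠ 0 := (measure_closedBall_pos _ _ one_pos).ne'
  have hV : V ≠ ∞ := measure_closedBall_lt_top.ne
  rw [apply, apply, inter_eq_left.mpr hA₁, inter_eq_left.mpr hB₁, mul_mul_mul_comm,
    ← ENNReal.mul_inv (.inl hV₀) (.inl hV), ← sq,
    ENNReal.inv_mul_le_iff (pow_ne_zero 2 hV₀) (ENNReal.pow_ne_top hV),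
    mul_comm (V ^ 2)]
  exact EuclideanSpace.volume_mul_volume_le_of_le_dist hA hB hA₁ hB₁ hε hAB

theorem setOf_le_le_of_lipschitzOnWith {f : EuclideanSpace ℝ (Fin m) → ℝ}
    (hf : LipschitzOnWith 1 f (closedBall 0 1))
    (hmed : 1 / 2 ≤ unitBallUniform m {x | f x ≤ 0}) {ε : ℝ} (hε : 0 ≤ ε) :
    unitBallUniform m {x | ε ≤ f x} ≤ 2 * ENNReal.ofReal (Real.exp (-(ε ^ 2 * m / 4))) := by
  set A := closedBall 0 1 ∩ {x | f x ≤ 0}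
  set B := closedBall 0 1 ∩ {x | ε ≤ f x}
  have hA : MeasurableSet A :=
    (hf.continuousOn.preimage_isClosed_of_isClosed isClosed_closedBall isClosed_Iic).measurableSet
  have hB : MeasurableSet B :=
    (hf.continuousOn.preimage_isClosed_of_isClosed isClosed_closedBall isClosed_Ici).measurableSet
  have hAB : ∀ a ∈ A, ∀ b ∈ B, ε ≤ dist a b := by
    rintro a ⟨ha₁, ha : f a ≤ 0⟩ b ⟨hb₁, hb : ε ≤ f b⟩
    have := hf.dist_le_mul b hb₁ a ha₁
    rw [Real.dist_eq, NNReal.coe_one, one_mul, dist_comm] at this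
    linarith [le_abs_self (f b - f a)]
  rw [← closedBall_inter] at hmed ⊢
  calc unitBallUniform m B = 2 * (1 / 2 * unitBallUniform m B) := by
        rw [← mul_assoc, one_div, ENNReal.mul_inv_cancel two_ne_zero ENNReal.ofNat_ne_top,
          one_mul]
    _ ≤ 2 * (unitBallUniform m A * unitBallUniform m B) := by gcongr
    _ ≤ 2 * ENNReal.ofReal (Real.exp (-(ε ^ 2 * m / 4))) := by
        gcongr
        exact mul_le_of_le_dist hA hB inter_subset_left inter_subset_left hε hAB

end unitBallUniform

theorem min_one_four_mul_sq_le {u : ℝ} (hu : 0 ≤ u) : min 1 (4 * u ^ 2) ≤ 2 * u := by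
  rcases le_total 1 (2 * u) with h | h
  · exact (min_le_left _ _).trans h
  · exact (min_le_right _ _).trans (by nlinarith)

/-- Lévy's concentration inequality for the Euclidean ball: there is a universal
constant `c > 0` such that for every `m`, every `1`-Lipschitz function `f` on the
unit ball `B_m` with median `0` (w.r.t. the normalized Lebesgue measure `ν`),
and every `ε > 0`, `ν {x : |f x| > ε} ≤ 2 exp(−c ε² m)`. -/
theorem levy_concentration_euclidean_ball :
    ∃ c > (0 : ℝ), ∀ m : ℕ, ∀ f : EuclideanSpace ℝ (Fin m) → ℝ,
      LipschitzOnWith 1 f (Metric.closedBall 0 1) →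
      (1 / 2 : ENNReal) ≤ unitBallUniform m {x | f x ≤ 0} →
      (1 / 2 : ENNReal) ≤ unitBallUniform m {x | 0 ≤ f x} →
      ∀ ε > (0 : ℝ),
        unitBallUniform m {x | ε < |f x|} ≤
          ENNReal.ofReal (2 * Real.exp (-(c * ε ^ 2 * m))) := by
  refine ⟨1 / 8, by norm_num, fun m f hf hmed_nonpos hmed_nonneg ε hε => ?_⟩
  set u := Real.exp (-(1 / 8 * ε ^ 2 * m))
  have hu : Real.exp (-(ε ^ 2 * m / 4)) = u ^ 2 := by rw [← Real.exp_nat_mul]; ring_nf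
  have hupper := unitBallUniform.setOf_le_le_of_lipschitzOnWith hf hmed_nonpos hε.le
  have hlower := unitBallUniform.setOf_le_le_of_lipschitzOnWith hf.neg
    (by simpa only [Pi.neg_apply, neg_nonpos] using hmed_nonneg) hε.le
  have htails : unitBallUniform m {x | ε < |f x|} ≤ ENNReal.ofReal (4 * u ^ 2) := by
    calc unitBallUniform m {x | ε < |f x|}
        ≤ unitBallUniform m ({x | ε ≤ f x} ∪ {x | ε ≤ (-f) x}) := by
          refine measure_mono fun x (hx : ε < |f x|) => ?_
          rcases lt_abs.mp hx with h | h
          exacts [.inl h.le, .inr h.le]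
      _ ≤ 2 * ENNReal.ofReal (u ^ 2) + 2 * ENNReal.ofReal (u ^ 2) :=
          (measure_union_le _ _).trans (by rw [← hu]; exact add_le_add hupper hlower)
      _ = ENNReal.ofReal (4 * u ^ 2) := by
          rw [← two_mul, ← mul_assoc, ENNReal.ofReal_mul (by norm_num)]; norm_num
  calc unitBallUniform m {x | ε < |f x|} ≤ min 1 (ENNReal.ofReal (4 * u ^ 2)) :=
        le_min prob_le_one htails
    _ = ENNReal.ofReal (min 1 (4 * u ^ 2)) := by rw [ENNReal.ofReal_min, ENNReal.ofReal_one]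
    _ ≤ ENNReal.ofReal (2 * u) :=
        ENNReal.ofReal_le_ofReal (min_one_four_mul_sq_le (Real.exp_nonneg _))
end
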